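/- arXiv:1406.3802 — 5 statements merged into one kernel-verified Lean document; each statement's English description precedes it below -/
import Mathlib

section
/- The function g_{1/2}(x) = (2√π x^{3/2})^{-1} exp(-1/(4x)) for x > 0 satisfies ∫_0^∞ e^{-px} g_{1/2}(x) dx = exp(-p^{1/2}) for all real p > 0. -/
/-!
Substituting `x = u⁻²` and completing the square, `p / u² + u² / 4 = √p + (u / 2 - √p / u)²`,
turns the Laplace transform into `exp (-√p) / √π` times the integral of the Gaussian
`exp (-(u / 2 - √p / u)²)` over `(0, ∞)`. By the Cauchy–Schlömilch transformation, for an even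
integrable `g` and `a, b > 0` the integral of `g (a t - b / t)` over `(0, ∞)` equals
`(2a)⁻¹ ∫ g`: the substitution `t ↦ b / (a t)` shows that the weights `a` and `b / t²` give the
same integral, and `a + b / t²` is the Jacobian of the bijection `t ↦ a t - b / t` from `(0, ∞)`
onto `ℝ`.
-/

open MeasureTheory Real Set

noncomputable def levySmirnov (x : ℝ) : ℝ :=
  Real.exp (-1 / (4 * x)) / (2 * Real.sqrt π * x ^ ((3 : ℝ) / 2))

section CauchySchlomilch

variable {E : Type*} [NormedAddCommGroup E] [NormedSpace ℝ E]

theorem integral_Ioi_div_sq_smul_comp_div (g : ℝ → E) {k : ℝ} (hk : 0 < k) :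
    ∫ t in Ioi 0, (k / t ^ 2) • g (k / t) = ∫ t in Ioi 0, g t := by
  have hmaps : MapsTo (fun t => k / t) (Ioi 0) (Ioi 0) := fun t ht => div_pos hk ht
  have hbij : BijOn (fun t => k / t) (Ioi 0) (Ioi 0) :=
    InvOn.bijOn ⟨fun _ _ => div_div_cancel₀ hk.ne', fun _ _ => div_div_cancel₀ hk.ne'⟩
      hmaps hmaps
  have hderiv : ∀ t ∈ Ioi (0 : ℝ),
      HasDerivWithinAt (fun t => k / t) (-(k / t ^ 2)) (Ioi 0) t := fun t ht =>
    ((hasDerivAt_const t k).div (hasDerivAt_id t) (ne_of_gt ht)).hasDerivWithinAt.congr_deriv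
      (by simp [neg_div])
  conv_rhs => rw [← hbij.image_eq,
    integral_image_eq_integral_abs_deriv_smul measurableSet_Ioi hderiv hbij.injOn]
  refine setIntegral_congr_fun measurableSet_Ioi fun t ht => ?_
  have : 0 < k / t ^ 2 := div_pos hk (pow_pos ht 2)
  simp only [abs_neg, abs_of_pos this]

theorem bijOn_mul_sub_div {a b : ℝ} (ha : 0 < a) (hb : 0 < b) :
    BijOn (fun t => a * t - b / t) (Ioi 0) univ := by
  refine ⟨mapsTo_univ _ _, StrictMonoOn.injOn fun s hs t ht hst => ?_, fun s _ => ?_⟩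
  · have : b / t < b / s := div_lt_div_of_pos_left hb hs hst
    have : a * s < a * t := mul_lt_mul_of_pos_left hst ha
    linarith
  · -- the positive root of `a t² - s t - b = 0`
    set r := √(s ^ 2 + 4 * a * b)
    have hr : r ^ 2 = s ^ 2 + 4 * a * b := sq_sqrt (by positivity)
    have hsr : |s| < r := by
      rw [← sqrt_sq_eq_abs]
      exact sqrt_lt_sqrt (sq_nonneg s) (by nlinarith)
    have hpos : 0 < s + r := by linarith [neg_abs_le s]
    refine ⟨(s + r) / (2 * a), div_pos hpos (by positivity), ?_⟩
    field_simp
    nlinarith [hr]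

theorem hasDerivAt_mul_sub_div (a b : ℝ) {t : ℝ} (ht : t ≠ 0) :
    HasDerivAt (fun t => a * t - b / t) (a + b / t ^ 2) t :=
  (((hasDerivAt_id t).const_mul a).sub
    ((hasDerivAt_const t b).div (hasDerivAt_id t) ht)).congr_deriv (by simp [neg_div])

theorem integral_Ioi_add_div_sq_smul_comp_mul_sub_div (g : ℝ → E) {a b : ℝ} (ha : 0 < a)
    (hb : 0 < b) :
    ∫ t in Ioi 0, (a + b / t ^ 2) • g (a * t - b / t) = ∫ s, g s := by
  conv_rhs => rw [← setIntegral_univ, ← (bijOn_mul_sub_div ha hb).image_eq,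
    integral_image_eq_integral_abs_deriv_smul measurableSet_Ioi
      (fun t ht => (hasDerivAt_mul_sub_div a b (ne_of_gt ht)).hasDerivWithinAt)
      (bijOn_mul_sub_div ha hb).injOn]
  refine setIntegral_congr_fun measurableSet_Ioi fun t ht => ?_
  have : 0 < a + b / t ^ 2 := by have := pow_pos (mem_Ioi.mp ht) 2; positivity
  simp only [abs_of_pos this]

theorem integrableOn_Ioi_add_div_sq_smul_comp_mul_sub_div {g : ℝ → E} (hg : Integrable g)
    {a b : ℝ} (ha : 0 < a) (hb : 0 < b) :
    IntegrableOn (fun t => (a + b / t ^ 2) • g (a * t - b / t)) (Ioi 0) := by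
  rw [← integrableOn_univ, ← (bijOn_mul_sub_div ha hb).image_eq,
    integrableOn_image_iff_integrableOn_abs_deriv_smul measurableSet_Ioi
      (fun t ht => (hasDerivAt_mul_sub_div a b (ne_of_gt ht)).hasDerivWithinAt)
      (bijOn_mul_sub_div ha hb).injOn] at hg
  refine hg.congr_fun (fun t ht => ?_) measurableSet_Ioi
  have : 0 < a + b / t ^ 2 := by have := pow_pos (mem_Ioi.mp ht) 2; positivity
  simp only [abs_of_pos this]

theorem integral_Ioi_comp_mul_sub_div {g : ℝ → E} (hg : Integrable g)
    (hg_even : ∀ s, g (-s) = g s) {a b : ℝ} (ha : 0 < a) (hb : 0 < b) :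
    ∫ t in Ioi 0, g (a * t - b / t) = (2 * a)⁻¹ • ∫ s, g s := by
  set G : ℝ → E := fun t => g (a * t - b / t)
  have hsum := integrableOn_Ioi_add_div_sq_smul_comp_mul_sub_div hg ha hb
  -- the weights `a` and `b / t²` are bounded multiples of `a + b / t²`
  have hG : IntegrableOn G (Ioi 0) := by
    refine IntegrableOn.congr_fun
      (hsum.bdd_smul a⁻¹ (φ := fun t => t ^ 2 / (a * t ^ 2 + b)) ?_ ?_) (fun t ht => ?_)
      measurableSet_Ioi
    · exact ((continuous_pow 2).div (by fun_prop) fun t => by positivity).aestronglyMeasurable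
    · refine Filter.Eventually.of_forall fun t => ?_
      rw [Real.norm_of_nonneg (by positivity), div_le_iff₀ (by positivity), inv_mul_eq_div,
        le_div_iff₀ ha]
      nlinarith
    · have : t ^ 2 / (a * t ^ 2 + b) * (a + b / t ^ 2) = 1 := by
        have := ne_of_gt (mem_Ioi.mp ht)
        field_simp
      simp only [Pi.smul_apply', smul_smul, this, one_smul, G]
  have hG' : IntegrableOn (fun t => (b / t ^ 2) • G t) (Ioi 0) :=
    (hsum.sub (hG.smul a)).congr_fun (fun t _ => by simp [G, add_smul]) measurableSet_Ioi
  -- `t ↦ (b / a) / t` swaps the two halves since it flips the sign of `a t - b / t`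
  have hflip : ∫ t in Ioi 0, (b / t ^ 2) • G t = a • ∫ t in Ioi 0, G t := by
    rw [← integral_Ioi_div_sq_smul_comp_div G (div_pos hb ha), ← integral_smul]
    refine setIntegral_congr_fun measurableSet_Ioi fun t ht => ?_
    have ht : t ≠ 0 := ne_of_gt ht
    have hGt : G (b / a / t) = G t := by
      simp only [G]
      rw [← hg_even]
      congr 1
      field_simp
      ring
    rw [hGt, smul_smul]
    congr 1
    field_simp
  have htwice : (2 * a) • ∫ t in Ioi 0, G t = ∫ s, g s := calc
    (2 * a) • ∫ t in Ioi 0, G t = (a • ∫ t in Ioi 0, G t) + a • ∫ t in Ioi 0, G t := by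
      rw [two_mul, add_smul]
    _ = ∫ t in Ioi 0, (a • G t + (b / t ^ 2) • G t) := by
      rw [integral_add (f := fun t => a • G t) (hG.smul a) hG', integral_smul, hflip]
    _ = ∫ s, g s := by
      simp only [← add_smul, G]
      exact integral_Ioi_add_div_sq_smul_comp_mul_sub_div g ha hb
  rw [← htwice, smul_smul, inv_mul_cancel₀ (by positivity), one_smul]

end CauchySchlomilch

theorem integral_Ioi_exp_neg_sq_mul_sub_div {a b : ℝ} (ha : 0 < a) (hb : 0 < b) :
    ∫ t in Ioi 0, exp (-(a * t - b / t) ^ 2) = √π / (2 * a) := by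
  have hgauss : ∫ s, exp (-s ^ 2) = √π := by simpa using integral_gaussian 1
  rw [integral_Ioi_comp_mul_sub_div (g := fun s => exp (-s ^ 2))
    (by simpa using integrable_exp_neg_mul_sq one_pos) (fun s => by simp) ha hb, hgauss,
    smul_eq_mul, inv_mul_eq_div]

theorem levySmirnov_inv_sq {u : ℝ} (hu : 0 < u) :
    levySmirnov (u ^ 2)⁻¹ = u ^ 3 * exp (-(u ^ 2 / 4)) / (2 * √π) := by
  have h3 : ((u ^ 2)⁻¹) ^ ((3 : ℝ) / 2) = (u ^ 3)⁻¹ := by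
    rw [inv_rpow (by positivity), ← rpow_natCast, ← rpow_mul hu.le]
    norm_num
  rw [levySmirnov, h3]
  field_simp

theorem rpow_neg_two_smul_laplace_levySmirnov_integrand {p u : ℝ} (hp : 0 ≤ p) (hu : 0 < u) :
    (|(-2 : ℝ)| * u ^ ((-2 : ℝ) - 1)) • (exp (-p * u ^ (-2 : ℝ)) * levySmirnov (u ^ (-2 : ℝ)))
      = exp (-√p) / √π * exp (-(1 / 2 * u - √p / u) ^ 2) := by
  have hexp : exp (-p * (u ^ 2)⁻¹) * exp (-(u ^ 2 / 4))
      = exp (-√p) * exp (-(1 / 2 * u - √p / u) ^ 2) := by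
    rw [← exp_add, ← exp_add]
    congr 1
    field_simp
    linear_combination 16 * sq_sqrt hp
  have hpow : ∀ n : ℕ, u ^ (-(n : ℝ)) = (u ^ n)⁻¹ := fun n => by
    rw [rpow_neg hu.le, rpow_natCast]
  rw [show (-2 : ℝ) - 1 = -(3 : ℕ) by norm_num, show (-2 : ℝ) = -(2 : ℕ) by norm_num, hpow, hpow,
    levySmirnov_inv_sq hu]
  have hπ : 0 < √π := sqrt_pos.2 pi_pos
  calc _ = exp (-p * (u ^ 2)⁻¹) * exp (-(u ^ 2 / 4)) / √π := by
        rw [smul_eq_mul, abs_neg, Nat.abs_cast, Nat.cast_ofNat]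
        field_simp
    _ = _ := by rw [hexp]; ring

theorem laplace_levySmirnov (p : ℝ) (hp : 0 < p) :
    ∫ x in Ioi (0 : ℝ), Real.exp (-p * x) * levySmirnov x
      = Real.exp (-Real.sqrt p) := by
  rw [← integral_comp_rpow_Ioi _ (by norm_num : (-2 : ℝ) ≠ 0),
    setIntegral_congr_fun measurableSet_Ioi
      fun u hu => rpow_neg_two_smul_laplace_levySmirnov_integrand hp.le hu,
    integral_const_mul, integral_Ioi_exp_neg_sq_mul_sub_div (by norm_num) (sqrt_pos.2 hp)]
  field_simp
end

section
/- Let f : (0,∞) → ℝ be measurable with Laplace transform F(p) = ∫_0^∞ e^{-pt} f(t) dt absolutely convergent for all p > 0, and assume f ≥ 0. Then for all p > 0, ∫_0^∞ e^{-px} (∫_0^∞ t (4πx³)^{-1/2} exp(-t²/(4x)) f(t) dt) dx = F(√p). -/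
/-!
The kernel `levyDensity t x` is the density of the one-sided ½-stable (Lévy) law at time
`t`, and its Laplace transform in `x` is `exp (-√p * t)`. Indeed, the substitution
`x = b / s ^ 2` turns `∫ x ^ (-3/2) * exp (-a * x - b / x) dx` into a multiple of the
Cauchy–Schlömilch integral `∫₀^∞ exp (-(s - c / s) ^ 2) ds = √π / 2`. The latter follows
from the substitution `u = s - c / s`, which gives
`∫₀^∞ (1 + c / s ^ 2) * exp (-(s - c / s) ^ 2) ds = √π`, together with the symmetry
`s ↦ c / s`, which shows that both halves of the weight `1 + c / s ^ 2` contribute equally.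
As the kernel is nonnegative, Fubini's theorem applies as soon as `exp (-√p * t) * f t` is
integrable, and exchanging the two integrals gives `F (√p)`.
-/

open MeasureTheory Real Set

section DivPow

variable {b : ℝ} {n : ℕ}

theorem hasDerivAt_const_div_pow (b : ℝ) (n : ℕ) {s : ℝ} (hs : s ≠ 0) :
    HasDerivAt (fun s => b / s ^ n) (-(n * b / s ^ (n + 1))) s := by
  have h := ((hasDerivAt_pow n s).inv (pow_ne_zero n hs)).const_mul b
  refine (h.congr_deriv ?_).congr_of_eventuallyEq (.of_forall fun s => div_eq_mul_inv b _)
  rcases n with _ | m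
  · simp
  · rw [Nat.add_sub_cancel]
    field_simp
    ring

theorem image_const_div_pow_Ioi (hb : 0 < b) (hn : n ≠ 0) :
    (fun s => b / s ^ n) '' Ioi 0 = Ioi 0 := by
  refine Subset.antisymm (image_subset_iff.2 fun s (hs : 0 < s) => div_pos hb (pow_pos hs n))
    fun y (hy : 0 < y) => ⟨(b / y) ^ (n⁻¹ : ℝ), rpow_pos_of_pos (div_pos hb hy) _, ?_⟩
  dsimp only
  rw [rpow_inv_natCast_pow (div_pos hb hy).le hn, div_div_cancel₀ hb.ne']

theorem injOn_const_div_pow (hb : b ≠ 0) (hn : n ≠ 0) :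
    InjOn (fun s => b / s ^ n) (Ioi 0) := fun s (hs : 0 < s) t (ht : 0 < t) h => by
  have : s ^ n = t ^ n := by simpa [div_div_cancel₀ hb] using congr_arg (b / ·) h
  exact (pow_left_inj₀ hs.le ht.le hn).1 this

theorem integral_comp_const_div_pow_Ioi (hb : 0 < b) (hn : n ≠ 0) (g : ℝ → ℝ) :
    ∫ s in Ioi 0, n * b / s ^ (n + 1) * g (b / s ^ n) = ∫ x in Ioi 0, g x := by
  conv_rhs => rw [← image_const_div_pow_Ioi hb hn,
    integral_image_eq_integral_abs_deriv_smul measurableSet_Ioi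
      (fun s hs => (hasDerivAt_const_div_pow b n (ne_of_gt hs)).hasDerivWithinAt)
      (injOn_const_div_pow hb.ne' hn)]
  refine setIntegral_congr_fun measurableSet_Ioi fun s (hs : 0 < s) => ?_
  rw [abs_neg, abs_of_pos (by positivity), smul_eq_mul]

theorem integrableOn_comp_const_div_pow_Ioi_iff (hb : 0 < b) (hn : n ≠ 0) {g : ℝ → ℝ} :
    IntegrableOn (fun s => n * b / s ^ (n + 1) * g (b / s ^ n)) (Ioi 0) ↔
      IntegrableOn g (Ioi 0) := by
  conv_rhs => rw [← image_const_div_pow_Ioi hb hn,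
    integrableOn_image_iff_integrableOn_abs_deriv_smul measurableSet_Ioi
      (fun s hs => (hasDerivAt_const_div_pow b n (ne_of_gt hs)).hasDerivWithinAt)
      (injOn_const_div_pow hb.ne' hn)]
  refine integrableOn_congr_fun (fun s (hs : 0 < s) => ?_) measurableSet_Ioi
  rw [abs_neg, abs_of_pos (by positivity), smul_eq_mul]

end DivPow

theorem integrable_exp_neg_sq : Integrable fun u : ℝ => exp (-u ^ 2) := by
  simpa using integrable_exp_neg_mul_sq one_pos

section CauchySchlomilch

variable {c : ℝ}

theorem hasDerivAt_sub_const_div (c : ℝ) {s : ℝ} (hs : s ≠ 0) :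
    HasDerivAt (fun s => s - c / s) (1 + c / s ^ 2) s := by
  have h := (hasDerivAt_id' s).sub ((hasDerivAt_inv hs).const_mul c)
  simp only [← div_eq_mul_inv] at h
  exact h.congr_deriv (by ring)

theorem injOn_sub_const_div (hc : 0 ≤ c) : InjOn (fun s => s - c / s) (Ioi 0) := by
  intro a (ha : 0 < a) b (hb : 0 < b) h
  have key : (a - b) * (a * b + c) = 0 := by
    field_simp at h
    linear_combination h
  have : a * b + c ≠ 0 := by positivity
  simpa [sub_eq_zero, this] using key

theorem image_sub_const_div_Ioi (hc : 0 < c) : (fun s => s - c / s) '' Ioi 0 = univ := by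
  refine eq_univ_of_forall fun u => ?_
  have hu : |u| < √(u ^ 2 + 4 * c) := by
    rw [← sqrt_sq_eq_abs]; exact sqrt_lt_sqrt (sq_nonneg u) (by linarith)
  have hs : 0 < u + √(u ^ 2 + 4 * c) := by linarith [neg_abs_le u]
  refine ⟨(u + √(u ^ 2 + 4 * c)) / 2, half_pos hs, ?_⟩
  have hr : √(u ^ 2 + 4 * c) ^ 2 = u ^ 2 + 4 * c := sq_sqrt (by positivity)
  field_simp [hs.ne']
  linear_combination hr

theorem integral_one_add_div_sq_mul_comp_sub_div (hc : 0 < c) (g : ℝ → ℝ) :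
    ∫ s in Ioi 0, (1 + c / s ^ 2) * g (s - c / s) = ∫ u, g u := by
  conv_rhs => rw [← setIntegral_univ, ← image_sub_const_div_Ioi hc,
    integral_image_eq_integral_abs_deriv_smul measurableSet_Ioi
      (fun s hs => (hasDerivAt_sub_const_div c (ne_of_gt hs)).hasDerivWithinAt)
      (injOn_sub_const_div hc.le)]
  refine setIntegral_congr_fun measurableSet_Ioi fun s (hs : 0 < s) => ?_
  rw [abs_of_pos (by positivity), smul_eq_mul]

theorem integrableOn_one_add_div_sq_mul_comp_sub_div (hc : 0 < c) {g : ℝ → ℝ}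
    (hg : Integrable g) :
    IntegrableOn (fun s => (1 + c / s ^ 2) * g (s - c / s)) (Ioi 0) := by
  rw [← integrableOn_univ, ← image_sub_const_div_Ioi hc,
    integrableOn_image_iff_integrableOn_abs_deriv_smul measurableSet_Ioi
      (fun s hs => (hasDerivAt_sub_const_div c (ne_of_gt hs)).hasDerivWithinAt)
      (injOn_sub_const_div hc.le)] at hg
  refine hg.congr_fun (fun s (hs : 0 < s) => ?_) measurableSet_Ioi
  dsimp only
  rw [abs_of_pos (by positivity), smul_eq_mul]

theorem integrableOn_exp_neg_sq_sub_div (hc : 0 < c) :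
    IntegrableOn (fun s => exp (-(s - c / s) ^ 2)) (Ioi 0) := by
  refine (integrableOn_one_add_div_sq_mul_comp_sub_div hc integrable_exp_neg_sq).mono'
    (by fun_prop) ?_
  filter_upwards [ae_restrict_mem measurableSet_Ioi] with s (hs : 0 < s)
  rw [norm_of_nonneg (exp_pos _).le]
  exact le_mul_of_one_le_left (exp_pos _).le (le_add_of_nonneg_right (by positivity))

theorem integral_exp_neg_sq_sub_div (hc : 0 < c) :
    ∫ s in Ioi 0, exp (-(s - c / s) ^ 2) = √π / 2 := by
  set E := fun s => exp (-(s - c / s) ^ 2)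
  have hE : IntegrableOn E (Ioi 0) := integrableOn_exp_neg_sq_sub_div hc
  have hsum : IntegrableOn (fun s => (1 + c / s ^ 2) * E s) (Ioi 0) :=
    integrableOn_one_add_div_sq_mul_comp_sub_div hc integrable_exp_neg_sq
  have hsymm : ∫ s in Ioi 0, c / s ^ 2 * E s = ∫ s in Ioi 0, E s := by
    rw [← integral_comp_const_div_pow_Ioi hc one_ne_zero E]
    refine setIntegral_congr_fun measurableSet_Ioi fun s (hs : 0 < s) => ?_
    simp only [E, pow_one, div_div_cancel₀ hc.ne']
    push_cast
    ring_nf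
  have hgauss : ∫ s in Ioi 0, (1 + c / s ^ 2) * E s = √π := by
    rw [integral_one_add_div_sq_mul_comp_sub_div hc fun u => exp (-u ^ 2)]
    simpa using integral_gaussian 1
  have hsplit : ∫ s in Ioi 0, (1 + c / s ^ 2) * E s
      = (∫ s in Ioi 0, E s) + ∫ s in Ioi 0, c / s ^ 2 * E s := by
    have hE' : IntegrableOn (fun s => c / s ^ 2 * E s) (Ioi 0) :=
      (hsum.sub hE).congr_fun (fun s _ => by simp only [Pi.sub_apply]; ring) measurableSet_Ioi
    rw [← integral_add hE hE']
    simp only [add_mul, one_mul]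
  linarith

end CauchySchlomilch

theorem rpow_neg_three_halves {x : ℝ} (hx : 0 ≤ x) : x ^ (-(3 / 2 : ℝ)) = (x * √x)⁻¹ := by
  rw [rpow_neg hx, show (3 / 2 : ℝ) = 1 + 1 / 2 by norm_num, rpow_add' hx (by norm_num),
    rpow_one, sqrt_eq_rpow]

section NegThreeHalves

variable {a b : ℝ}

theorem div_sq_mul_rpow_neg_three_halves_mul_exp (ha : 0 < a) (hb : 0 < b) {s : ℝ}
    (hs : 0 < s) :
    2 * b / s ^ 3 * ((b / s ^ 2) ^ (-(3 / 2 : ℝ)) * exp (-(a * (b / s ^ 2)) - b / (b / s ^ 2)))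
      = 2 / √b * exp (-2 * √(a * b)) * exp (-(s - √(a * b) / s) ^ 2) := by
  have hsqrt : √(b / s ^ 2) = √b / s := by rw [sqrt_div' _ (sq_nonneg s), sqrt_sq hs.le]
  have hc : √(a * b) ^ 2 = a * b := sq_sqrt (by positivity)
  have hb' : 0 < √b := sqrt_pos.2 hb
  rw [rpow_neg_three_halves (by positivity), hsqrt, mul_assoc (2 / √b), ← exp_add]
  field_simp
  congr 1
  field_simp
  rw [mul_comm b a]
  linear_combination hc

theorem integrableOn_rpow_neg_three_halves_mul_exp (ha : 0 < a) (hb : 0 < b) :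
    IntegrableOn (fun x => x ^ (-(3 / 2 : ℝ)) * exp (-(a * x) - b / x)) (Ioi 0) := by
  rw [← integrableOn_comp_const_div_pow_Ioi_iff hb two_ne_zero]
  refine IntegrableOn.congr_fun
    ((integrableOn_exp_neg_sq_sub_div (c := √(a * b)) (by positivity)).const_mul
    (2 / √b * exp (-2 * √(a * b)))) ?_ measurableSet_Ioi
  refine fun s (hs : 0 < s) => ?_
  dsimp only
  rw [← div_sq_mul_rpow_neg_three_halves_mul_exp ha hb hs]
  norm_num

theorem integral_rpow_neg_three_halves_mul_exp (ha : 0 < a) (hb : 0 < b) :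
    ∫ x in Ioi 0, x ^ (-(3 / 2 : ℝ)) * exp (-(a * x) - b / x)
      = √(π / b) * exp (-2 * √(a * b)) := by
  rw [← integral_comp_const_div_pow_Ioi hb two_ne_zero]
  calc _ = ∫ s in Ioi 0,
        2 / √b * exp (-2 * √(a * b)) * exp (-(s - √(a * b) / s) ^ 2) := by
        refine setIntegral_congr_fun measurableSet_Ioi fun s (hs : 0 < s) => ?_
        rw [← div_sq_mul_rpow_neg_three_halves_mul_exp ha hb hs]
        norm_num
    _ = √(π / b) * exp (-2 * √(a * b)) := by
        rw [integral_const_mul, integral_exp_neg_sq_sub_div (by positivity),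
          sqrt_div' _ hb.le]
        field_simp

end NegThreeHalves

theorem integral_integral_mul_swap_of_nonneg {α β : Type*} [MeasurableSpace α]
    [MeasurableSpace β] {μ : Measure α} {ν : Measure β} [SFinite μ] [SFinite ν]
    {K : α → β → ℝ} {f : β → ℝ} (hK : AEStronglyMeasurable (Function.uncurry K) (μ.prod ν))
    (hf : AEStronglyMeasurable f ν) (hK_nonneg : ∀ᵐ y ∂ν, 0 ≤ᵐ[μ] fun x => K x y)
    (hK_int : ∀ᵐ y ∂ν, Integrable (fun x => K x y) μ)
    (hKf : Integrable (fun y => (∫ x, K x y ∂μ) * f y) ν) :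
    ∫ x, ∫ y, K x y * f y ∂ν ∂μ = ∫ y, (∫ x, K x y ∂μ) * f y ∂ν := by
  have hprod : Integrable (Function.uncurry fun x y => K x y * f y) (μ.prod ν) := by
    have hmeas : AEStronglyMeasurable (Function.uncurry fun x y => K x y * f y) (μ.prod ν) :=
      hK.mul (hf.comp_quasiMeasurePreserving Measure.quasiMeasurePreserving_snd)
    refine (integrable_prod_iff' hmeas).2 ⟨?_, hKf.norm.congr ?_⟩
    · filter_upwards [hK_int] with y hy using hy.mul_const (f y)
    · filter_upwards [hK_nonneg] with y hy
      have hKy : ∫ x, ‖K x y * f y‖ ∂μ = ∫ x, K x y * ‖f y‖ ∂μ := by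
        refine integral_congr_ae ?_
        filter_upwards [hy] with x hx
        rw [norm_mul, norm_of_nonneg hx]
      simp only [Function.uncurry_apply_pair]
      rw [hKy, integral_mul_const, norm_mul,
        norm_of_nonneg (integral_nonneg_of_ae hy)]
  rw [integral_integral_swap hprod]
  simp only [integral_mul_const]

noncomputable def levyDensity (t x : ℝ) : ℝ :=
  t * (4 * π * x ^ 3) ^ (-(1 : ℝ) / 2) * exp (-t ^ 2 / (4 * x))

section Levy

variable {p t x : ℝ}

theorem levyDensity_nonneg (ht : 0 ≤ t) (hx : 0 ≤ x) : 0 ≤ levyDensity t x := by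
  unfold levyDensity; positivity

theorem exp_neg_mul_mul_levyDensity (p t : ℝ) (hx : 0 < x) :
    exp (-p * x) * levyDensity t x
      = t / (2 * √π) * (x ^ (-(3 / 2 : ℝ)) * exp (-(p * x) - t ^ 2 / 4 / x)) := by
  have hsqrt : √(4 * π * x ^ 3) = 2 * √π * (x * √x) := by
    rw [show 4 * π * x ^ 3 = (2 * √π * x) ^ 2 * x by
        rw [mul_pow, mul_pow, sq_sqrt pi_pos.le]; ring,
      sqrt_mul (sq_nonneg _), sqrt_sq (by positivity)]
    ring
  have hrpow : (4 * π * x ^ 3) ^ (-(1 : ℝ) / 2) = (2 * √π)⁻¹ * x ^ (-(3 / 2 : ℝ)) := by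
    rw [rpow_neg_three_halves hx.le, ← mul_inv, ← hsqrt, neg_div, rpow_neg (by positivity),
      sqrt_eq_rpow]
  rw [levyDensity, hrpow, sub_eq_add_neg, exp_add]
  ring_nf

theorem integrableOn_exp_neg_mul_levyDensity (hp : 0 < p) (ht : 0 < t) :
    IntegrableOn (fun x => exp (-p * x) * levyDensity t x) (Ioi 0) :=
  IntegrableOn.congr_fun
    ((integrableOn_rpow_neg_three_halves_mul_exp hp (by positivity)).const_mul _)
    (fun _ hx => (exp_neg_mul_mul_levyDensity p t hx).symm) measurableSet_Ioi

theorem integral_exp_neg_mul_levyDensity (hp : 0 < p) (ht : 0 < t) :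
    ∫ x in Ioi 0, exp (-p * x) * levyDensity t x = exp (-√p * t) := by
  rw [setIntegral_congr_fun measurableSet_Ioi fun _ hx => exp_neg_mul_mul_levyDensity p t hx,
    integral_const_mul, integral_rpow_neg_three_halves_mul_exp hp (by positivity)]
  have h1 : √(π / (t ^ 2 / 4)) = 2 * √π / t := by
    rw [sqrt_div' _ (by positivity), sqrt_div' _ (by norm_num), sqrt_sq ht.le,
      show (4 : ℝ) = 2 ^ 2 by norm_num, sqrt_sq (by norm_num)]
    field_simp
  have h2 : √(p * (t ^ 2 / 4)) = √p * t / 2 := by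
    rw [sqrt_mul hp.le, sqrt_div' _ (by norm_num), sqrt_sq ht.le,
      show (4 : ℝ) = 2 ^ 2 by norm_num, sqrt_sq (by norm_num)]
    ring
  have hπ : 0 < √π := sqrt_pos.2 pi_pos
  rw [h1, h2]
  field_simp

end Levy

theorem laplace_halfSubordination_general (f : ℝ → ℝ) (hf : Measurable f)
    (hint : ∀ p : ℝ, 0 < p →
      IntegrableOn (fun t => Real.exp (-p * t) * f t) (Ioi 0))
    (F : ℝ → ℝ) (hF : ∀ p : ℝ, F p = ∫ t in Ioi (0 : ℝ), Real.exp (-p * t) * f t) :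
    ∀ p : ℝ, 0 < p →
      (∫ x in Ioi (0 : ℝ), Real.exp (-p * x) *
        ∫ t in Ioi (0 : ℝ),
          t * (4 * π * x ^ 3) ^ (-(1 : ℝ) / 2) * Real.exp (-t ^ 2 / (4 * x)) * f t)
        = F (Real.sqrt p) := by
  intro p hp
  have hKf : IntegrableOn (fun t => (∫ x in Ioi 0, exp (-p * x) * levyDensity t x) * f t)
      (Ioi 0) := by
    refine (hint _ (sqrt_pos.2 hp)).congr_fun (fun t ht => ?_) measurableSet_Ioi
    rw [integral_exp_neg_mul_levyDensity hp ht]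
  calc _ = ∫ x in Ioi 0, ∫ t in Ioi 0, exp (-p * x) * levyDensity t x * f t := by
        congr 1 with x
        rw [← integral_const_mul]
        congr 1 with t
        rw [levyDensity]
        ring
    _ = ∫ t in Ioi 0, (∫ x in Ioi 0, exp (-p * x) * levyDensity t x) * f t := by
        refine integral_integral_mul_swap_of_nonneg ?_ hf.aestronglyMeasurable ?_ ?_ hKf
        · unfold levyDensity; fun_prop
        · filter_upwards [ae_restrict_mem measurableSet_Ioi] with t (ht : 0 < t)
          filter_upwards [ae_restrict_mem measurableSet_Ioi] with x (hx : 0 < x)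
          exact mul_nonneg (exp_pos _).le (levyDensity_nonneg ht.le hx.le)
        · filter_upwards [ae_restrict_mem measurableSet_Ioi] with t ht
          exact integrableOn_exp_neg_mul_levyDensity hp ht
    _ = F √p := by
        rw [hF]
        exact setIntegral_congr_fun measurableSet_Ioi fun t ht => by
          rw [integral_exp_neg_mul_levyDensity hp ht]

theorem laplace_halfSubordination (f : ℝ → ℝ) (hf : Measurable f)
    (hpos : ∀ t ∈ Ioi (0 : ℝ), 0 ≤ f t)
    (hint : ∀ p : ℝ, 0 < p →
      IntegrableOn (fun t => Real.exp (-p * t) * f t) (Ioi 0))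
    (F : ℝ → ℝ) (hF : ∀ p : ℝ, F p = ∫ t in Ioi (0 : ℝ), Real.exp (-p * t) * f t) :
    ∀ p : ℝ, 0 < p →
      (∫ x in Ioi (0 : ℝ), Real.exp (-p * x) *
        ∫ t in Ioi (0 : ℝ),
          t * (4 * π * x ^ 3) ^ (-(1 : ℝ) / 2) * Real.exp (-t ^ 2 / (4 * x)) * f t)
        = F (Real.sqrt p) :=
  laplace_halfSubordination_general f hf hint F hF
end

section
/- Let f : (0,∞) → ℝ be measurable and nonnegative with Laplace transform F(p) = ∫_0^∞ e^{-pt} f(t) dt convergent for all p > 0. Then for all p > 0, ∫_0^∞ e^{-px} ( (πx)^{-1/2} ∫_0^∞ exp(-t²/(4x)) f(t) dt ) dx = p^{-1/2} F(√p). -/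
/-!
Substituting `x = u ^ 2` and completing the square,
`e^{-p u²} e^{-t²/(4u²)} = e^{-√p t} e^{-(√p u - t/(2u))²}`, reduces the Laplace transform of
the kernel `x ↦ (π x)^{-1/2} e^{-t²/(4x)}` to `∫₀^∞ e^{-(A u - C/u)²} du = √π / (2A)`.
That integral follows from the Gaussian integral: `v = A u - C/u` maps `(0, ∞)` onto `ℝ`
with `dv = (A + C/u²) du`, and the inversion `u ↦ (C/A)/u` shows that the two summands of
`A + C/u²` contribute equally. Since everything is nonnegative, Fubini then exchanges the
two integrals.
-/

open MeasureTheory Real Set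

section ChangeOfVariables

variable {E : Type*} [NormedAddCommGroup E] [NormedSpace ℝ E]

theorem integral_comp_div_Ioi (g : ℝ → E) {k : ℝ} (hk : 0 < k) :
    ∫ x in Ioi 0, (k / x ^ 2) • g (k / x) = ∫ x in Ioi 0, g x := by
  have hderiv : ∀ x ∈ Ioi (0 : ℝ),
      HasDerivWithinAt (fun x ↦ k / x) (-(k / x ^ 2)) (Ioi 0) x := fun x hx ↦ by
    simpa [div_eq_mul_inv] using ((hasDerivAt_inv (ne_of_gt hx)).const_mul k).hasDerivWithinAt
  have hinj : InjOn (fun x ↦ k / x) (Ioi 0) :=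
    StrictAntiOn.injOn fun x hx y _ hxy ↦ div_lt_div_of_pos_left hk hx hxy
  have himage : (fun x ↦ k / x) '' Ioi 0 = Ioi 0 := by
    refine (image_subset_iff.2 fun x (hx : 0 < x) ↦ div_pos hk hx).antisymm fun y (hy : 0 < y) ↦
      ⟨k / y, div_pos hk hy, div_div_cancel₀ hk.ne'⟩
  have := integral_image_eq_integral_abs_deriv_smul measurableSet_Ioi hderiv hinj g
  rw [himage] at this
  rw [this]
  refine setIntegral_congr_fun measurableSet_Ioi fun x (hx : 0 < x) ↦ ?_
  rw [abs_neg, abs_of_pos (by positivity)]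

theorem integral_comp_sq_Ioi (g : ℝ → E) :
    ∫ x in Ioi 0, (2 * x) • g (x ^ 2) = ∫ x in Ioi 0, g x := by
  rw [← integral_comp_rpow_Ioi_of_pos (g := g) two_pos]
  refine setIntegral_congr_fun measurableSet_Ioi fun x _ ↦ ?_
  norm_num

end ChangeOfVariables

section MulSubDiv

variable {A C : ℝ}

theorem image_mul_sub_div_Ioi (hA : 0 < A) (hC : 0 < C) :
    (fun u ↦ A * u - C / u) '' Ioi 0 = univ := by
  refine eq_univ_of_forall fun v ↦ ?_
  -- the positive root of `A u² - v u - C = 0`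
  set s := √(v ^ 2 + 4 * A * C)
  have hs : s ^ 2 = v ^ 2 + 4 * A * C := sq_sqrt (by positivity)
  have hvs : 0 < v + s := by nlinarith [sqrt_nonneg (v ^ 2 + 4 * A * C), mul_pos hA hC]
  refine ⟨(v + s) / (2 * A), div_pos hvs (by positivity), ?_⟩
  field_simp
  nlinarith

theorem strictMonoOn_mul_sub_div (hA : 0 < A) (hC : 0 < C) :
    StrictMonoOn (fun u ↦ A * u - C / u) (Ioi 0) := fun _ hu _ _ huv ↦
  sub_lt_sub (mul_lt_mul_of_pos_left huv hA) (div_lt_div_of_pos_left hC hu huv)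

theorem integral_Ioi_deriv_mul_exp_neg_sq_mul_sub_div (hA : 0 < A) (hC : 0 < C) :
    ∫ u in Ioi 0, (A + C / u ^ 2) * exp (-(A * u - C / u) ^ 2) = √π := by
  have hderiv : ∀ u ∈ Ioi (0 : ℝ),
      HasDerivWithinAt (fun u ↦ A * u - C / u) (A + C / u ^ 2) (Ioi 0) u := fun u hu ↦ by
    have := ((hasDerivAt_id' u).const_mul A).fun_sub
      ((hasDerivAt_const u C).fun_div (hasDerivAt_id' u) (ne_of_gt hu))
    exact (this.congr_deriv (by ring)).hasDerivWithinAt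
  have := integral_image_eq_integral_abs_deriv_smul measurableSet_Ioi hderiv
    (strictMonoOn_mul_sub_div hA hC).injOn fun v ↦ exp (-v ^ 2)
  rw [image_mul_sub_div_Ioi hA hC, setIntegral_univ] at this
  have hgauss : ∫ v : ℝ, exp (-v ^ 2) = √π := by simpa using integral_gaussian 1
  rw [← hgauss, this]
  refine setIntegral_congr_fun measurableSet_Ioi fun u (hu : 0 < u) ↦ ?_
  rw [abs_of_pos (by positivity), smul_eq_mul]

theorem integral_Ioi_exp_neg_sq_mul_sub_div_s3 (hA : 0 < A) (hC : 0 < C) :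
    ∫ u in Ioi 0, exp (-(A * u - C / u) ^ 2) = √π / (2 * A) := by
  set g : ℝ → ℝ := fun u ↦ exp (-(A * u - C / u) ^ 2)
  have hderiv : ∫ u in Ioi 0, (A + C / u ^ 2) * g u = √π :=
    integral_Ioi_deriv_mul_exp_neg_sq_mul_sub_div hA hC
  have hderiv_int : IntegrableOn (fun u ↦ (A + C / u ^ 2) * g u) (Ioi 0) :=
    .of_integral_ne_zero (by rw [hderiv]; positivity)
  have hinv : ∫ u in Ioi 0, (C / A / u ^ 2) * g u = ∫ u in Ioi 0, g u := by
    rw [← integral_comp_div_Ioi g (div_pos hC hA)]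
    refine setIntegral_congr_fun measurableSet_Ioi fun u (hu : 0 < u) ↦ ?_
    simp only [g, smul_eq_mul]
    congr 3
    field_simp
    ring
  have hg_int : IntegrableOn g (Ioi 0) := by
    refine (hderiv_int.const_mul A⁻¹).mono' (by fun_prop) ?_
    filter_upwards [ae_restrict_mem measurableSet_Ioi] with u (hu : 0 < u)
    rw [norm_of_nonneg (exp_nonneg _), ← mul_assoc, mul_add, inv_mul_cancel₀ hA.ne']
    exact le_mul_of_one_le_left (exp_nonneg _) (by simp only [le_add_iff_nonneg_right]; positivity)
  have hinv_int : IntegrableOn (fun u ↦ (C / A / u ^ 2) * g u) (Ioi 0) := by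
    refine (hderiv_int.const_mul A⁻¹).mono' (by fun_prop) ?_
    filter_upwards [ae_restrict_mem measurableSet_Ioi] with u (hu : 0 < u)
    have : A⁻¹ * ((A + C / u ^ 2) * g u) = g u + C / A / u ^ 2 * g u := by
      field_simp
    rw [norm_of_nonneg (by positivity), this]
    exact le_add_of_nonneg_left (exp_nonneg _)
  have : √π = 2 * A * ∫ u in Ioi 0, g u := calc
    √π = ∫ u in Ioi 0, (A * g u + A * ((C / A / u ^ 2) * g u)) := by
      rw [← hderiv]
      refine setIntegral_congr_fun measurableSet_Ioi fun u (hu : 0 < u) ↦ ?_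
      field_simp
    _ = 2 * A * ∫ u in Ioi 0, g u := by
      rw [integral_add (hg_int.const_mul A) (hinv_int.const_mul A), integral_const_mul,
        integral_const_mul, hinv]
      ring
  rw [this]
  field_simp

end MulSubDiv

theorem integral_Ioi_exp_neg_mul_mul_rpow_mul_exp_neg_sq_div {p t : ℝ} (hp : 0 < p) (ht : 0 < t) :
    ∫ x in Ioi 0, exp (-p * x) * ((π * x) ^ (-(1 : ℝ) / 2) * exp (-t ^ 2 / (4 * x)))
      = p ^ (-(1 : ℝ) / 2) * exp (-(√p * t)) := by
  have hsqrt : ∀ x : ℝ, 0 ≤ x → x ^ (-(1 : ℝ) / 2) = (√x)⁻¹ := fun x hx ↦ by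
    rw [neg_div, rpow_neg hx, sqrt_eq_rpow, one_div]
  rw [← integral_comp_sq_Ioi, hsqrt p hp.le]
  calc _ = ∫ u in Ioi 0, 2 / √π * exp (-(√p * t)) * exp (-(√p * u - t / 2 / u) ^ 2) := by
        refine setIntegral_congr_fun measurableSet_Ioi fun u (hu : 0 < u) ↦ ?_
        have hsp : √p ^ 2 = p := sq_sqrt hp.le
        have hexp : exp (-p * u ^ 2) * exp (-t ^ 2 / (4 * u ^ 2))
            = exp (-(√p * t)) * exp (-(√p * u - t / 2 / u) ^ 2) := by
          rw [← exp_add, ← exp_add]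
          congr 1
          field_simp
          linear_combination 16 * u ^ 4 * hsp
        rw [hsqrt _ (by positivity), sqrt_mul pi_pos.le, sqrt_sq hu.le, smul_eq_mul,
          mul_assoc (2 / √π), ← hexp]
        field_simp
    _ = _ := by
      rw [integral_const_mul, integral_Ioi_exp_neg_sq_mul_sub_div_s3 (sqrt_pos.2 hp) (half_pos ht)]
      field_simp

theorem integrable_exp_neg_mul_rpow_mul_exp_neg_sq_div_mul {f : ℝ → ℝ} (hf : Measurable f)
    (hpos : ∀ t ∈ Ioi (0 : ℝ), 0 ≤ f t) {p : ℝ} (hp : 0 < p)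
    (hint : IntegrableOn (fun t ↦ exp (-√p * t) * f t) (Ioi 0)) :
    Integrable (Function.uncurry fun x t ↦
        exp (-p * x) * ((π * x) ^ (-(1 : ℝ) / 2) * exp (-t ^ 2 / (4 * x))) * f t)
      ((volume.restrict (Ioi 0)).prod (volume.restrict (Ioi 0))) := by
  rw [integrable_prod_iff' (by fun_prop)]
  constructor
  · filter_upwards [ae_restrict_mem measurableSet_Ioi] with t ht
    refine Integrable.mul_const (.of_integral_ne_zero ?_) (f t)
    rw [integral_Ioi_exp_neg_mul_mul_rpow_mul_exp_neg_sq_div hp ht]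
    positivity
  · refine (hint.const_mul (p ^ (-(1 : ℝ) / 2))).congr ?_
    filter_upwards [ae_restrict_mem measurableSet_Ioi] with t ht
    rw [neg_mul, ← mul_assoc, ← integral_Ioi_exp_neg_mul_mul_rpow_mul_exp_neg_sq_div hp ht,
      ← integral_mul_const]
    refine setIntegral_congr_fun measurableSet_Ioi fun x (hx : 0 < x) ↦ ?_
    simp only [Function.uncurry_apply_pair]
    rw [norm_of_nonneg (mul_nonneg (by positivity) (hpos t ht))]

theorem laplace_halfSubordination_bar (f : ℝ → ℝ) (hf : Measurable f)
    (hpos : ∀ t ∈ Ioi (0 : ℝ), 0 ≤ f t)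
    (hint : ∀ p : ℝ, 0 < p →
      IntegrableOn (fun t => Real.exp (-p * t) * f t) (Ioi 0))
    (F : ℝ → ℝ) (hF : ∀ p : ℝ, F p = ∫ t in Ioi (0 : ℝ), Real.exp (-p * t) * f t) :
    ∀ p : ℝ, 0 < p →
      (∫ x in Ioi (0 : ℝ), Real.exp (-p * x) *
        ((π * x) ^ (-(1 : ℝ) / 2) *
          ∫ t in Ioi (0 : ℝ), Real.exp (-t ^ 2 / (4 * x)) * f t))
        = p ^ (-(1 : ℝ) / 2) * F (Real.sqrt p) := by
  intro p hp
  set k : ℝ → ℝ → ℝ := fun x t ↦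
    exp (-p * x) * ((π * x) ^ (-(1 : ℝ) / 2) * exp (-t ^ 2 / (4 * x)))
  calc _ = ∫ x in Ioi 0, ∫ t in Ioi 0, k x t * f t := by
        refine setIntegral_congr_fun measurableSet_Ioi fun x _ ↦ ?_
        simp only [k, ← integral_const_mul, mul_assoc]
    _ = ∫ t in Ioi 0, ∫ x in Ioi 0, k x t * f t :=
        integral_integral_swap <| integrable_exp_neg_mul_rpow_mul_exp_neg_sq_div_mul hf hpos hp
          (hint √p (sqrt_pos.2 hp))
    _ = ∫ t in Ioi 0, p ^ (-(1 : ℝ) / 2) * (exp (-√p * t) * f t) := by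
        refine setIntegral_congr_fun measurableSet_Ioi fun t (ht : 0 < t) ↦ ?_
        rw [integral_mul_const, integral_Ioi_exp_neg_mul_mul_rpow_mul_exp_neg_sq_div hp ht, neg_mul,
          mul_assoc]
    _ = _ := by rw [integral_const_mul, hF]
end

section
/- Suppose g : (0,∞) → ℝ is nonnegative measurable with ∫_0^∞ e^{-px} g(x) dx = exp(-p^α) for all p > 0, 0 < α < 1, and f : (0,∞) → ℝ is nonnegative measurable with Laplace transform F(p) finite for all p > 0. Define f̄(x) = (x/α) ∫_0^∞ t^{-1-1/α} g(x / t^{1/α}) f(t) dt. Then for all p > 0, ∫_0^∞ e^{-px} f̄(x) dx = p^{α-1} F(p^α). -/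
/-!
Differentiating `∫ e^{-px} g(x) dx = exp (-p^α)` under the integral sign gives the first moment
`∫ x e^{-qx} g(x) dx = α q^{α-1} exp (-q^α)`. The substitution `x = t^{1/α} y` turns the Laplace
transform in `x` of the subordination kernel `N_α(t, x)` into exactly this moment, namely
`p^{α-1} exp (-p^α t)`. Everything is nonnegative, so by Tonelli the `x`-integral may be done
first, which leaves `p^{α-1} ∫ exp (-p^α t) f(t) dt = p^{α-1} F(p^α)`.
-/

open MeasureTheory Real Set

theorem integral_integral_swap_of_nonneg {α β : Type*} [MeasurableSpace α] [MeasurableSpace β]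
    {μ : Measure α} {ν : Measure β} [SFinite μ] [SFinite ν] {f : α → β → ℝ}
    (hf : AEStronglyMeasurable (Function.uncurry f) (μ.prod ν))
    (hf_nonneg : ∀ᵐ y ∂ν, 0 ≤ᵐ[μ] fun x => f x y)
    (hf_int : ∀ᵐ y ∂ν, Integrable (fun x => f x y) μ)
    (hF_int : Integrable (fun y => ∫ x, f x y ∂μ) ν) :
    ∫ x, ∫ y, f x y ∂ν ∂μ = ∫ y, ∫ x, f x y ∂μ ∂ν := by
  refine integral_integral_swap ((integrable_prod_iff' hf).2 ⟨hf_int, hF_int.congr ?_⟩)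
  filter_upwards [hf_nonneg] with y hy
  exact integral_congr_ae (hy.mono fun x hx => (Real.norm_of_nonneg hx).symm)

theorem mul_exp_neg_mul_le {q : ℝ} (hq : 0 < q) (x : ℝ) :
    x * exp (-q * x) ≤ q⁻¹ * exp (-1) := by
  have := mul_exp_neg_le_exp_neg_one (q * x)
  rw [le_inv_mul_iff₀ hq]
  simpa [neg_mul, mul_assoc] using this

section LaplaceTransform

variable {g : ℝ → ℝ}

theorem hasDerivAt_integral_exp_neg_mul_Ioi
    (hg : ∀ p, 0 < p → IntegrableOn (fun x => exp (-p * x) * g x) (Ioi 0))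
    {q : ℝ} (hq : 0 < q) :
    IntegrableOn (fun x => x * (exp (-q * x) * g x)) (Ioi 0) ∧
      HasDerivAt (fun p => ∫ x in Ioi 0, exp (-p * x) * g x)
        (-∫ x in Ioi 0, x * (exp (-q * x) * g x)) q := by
  have hq4 : 0 < q / 4 := by positivity
  have hbound : ∀ᵐ x ∂volume.restrict (Ioi 0), ∀ r ∈ Metric.ball q (q / 2),
      ‖-(x * (exp (-r * x) * g x))‖
        ≤ (q / 4)⁻¹ * exp (-1) * ‖exp (-(q / 4) * x) * g x‖ := by
    filter_upwards [ae_restrict_mem measurableSet_Ioi] with x (hx : 0 < x) r hr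
    rw [Metric.mem_ball, Real.dist_eq, abs_lt] at hr
    have hexp : exp (-r * x) ≤ exp (-(q / 4) * x) * exp (-(q / 4) * x) := by
      rw [← exp_add, exp_le_exp]; nlinarith
    calc ‖-(x * (exp (-r * x) * g x))‖ = x * exp (-r * x) * |g x| := by
          rw [norm_neg, norm_mul, norm_mul, Real.norm_of_nonneg hx.le,
            Real.norm_of_nonneg (exp_pos _).le, Real.norm_eq_abs, mul_assoc]
      _ ≤ x * (exp (-(q / 4) * x) * exp (-(q / 4) * x)) * |g x| := by gcongr
      _ = (x * exp (-(q / 4) * x)) * ‖exp (-(q / 4) * x) * g x‖ := by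
          rw [norm_mul, Real.norm_of_nonneg (exp_pos _).le, Real.norm_eq_abs]; ring
      _ ≤ (q / 4)⁻¹ * exp (-1) * ‖exp (-(q / 4) * x) * g x‖ :=
          mul_le_mul_of_nonneg_right (mul_exp_neg_mul_le hq4 x) (norm_nonneg _)
  have hderiv : ∀ᵐ x ∂volume.restrict (Ioi 0), ∀ r ∈ Metric.ball q (q / 2),
      HasDerivAt (fun r => exp (-r * x) * g x) (-(x * (exp (-r * x) * g x))) r := by
    refine Filter.Eventually.of_forall fun x r _ => ?_
    have hlin : HasDerivAt (fun r => -r * x) (-x) r := by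
      simpa using (hasDerivAt_id r).neg.mul_const x
    exact (hlin.exp.mul_const (g x)).congr_deriv (by ring)
  obtain ⟨hint, hhas⟩ := hasDerivAt_integral_of_dominated_loc_of_deriv_le
    (F := fun r x => exp (-r * x) * g x) (Metric.ball_mem_nhds q (by positivity))
    (by filter_upwards [Ioi_mem_nhds hq] with r hr using (hg r hr).aestronglyMeasurable)
    (hg q hq) ((continuous_id.aestronglyMeasurable.mul (hg q hq).aestronglyMeasurable).neg)
    hbound ((hg _ hq4).norm.const_mul _) hderiv
  exact ⟨by simpa [IntegrableOn] using hint.neg, by rwa [integral_neg] at hhas⟩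

theorem integral_mul_exp_neg_mul_of_laplace_eq {α : ℝ}
    (hgL : ∀ p, 0 < p → ∫ x in Ioi 0, exp (-p * x) * g x = exp (-(p ^ α)))
    {q : ℝ} (hq : 0 < q) :
    IntegrableOn (fun x => x * (exp (-q * x) * g x)) (Ioi 0) ∧
      ∫ x in Ioi 0, x * (exp (-q * x) * g x) = α * q ^ (α - 1) * exp (-(q ^ α)) := by
  have hg (p : ℝ) (hp : 0 < p) : IntegrableOn (fun x => exp (-p * x) * g x) (Ioi 0) :=
    Integrable.of_integral_ne_zero (by rw [hgL p hp]; exact (exp_pos _).ne')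
  obtain ⟨hint, hderiv⟩ := hasDerivAt_integral_exp_neg_mul_Ioi hg hq
  refine ⟨hint, ?_⟩
  have hderiv' : HasDerivAt (fun p => exp (-(p ^ α)))
      (-∫ x in Ioi 0, x * (exp (-q * x) * g x)) q :=
    hderiv.congr_of_eventuallyEq
      (Filter.eventually_of_mem (Ioi_mem_nhds hq) fun p hp => (hgL p hp).symm)
  have hexp : HasDerivAt (fun p => exp (-(p ^ α))) (exp (-(q ^ α)) * -(α * q ^ (α - 1))) q :=
    (hasDerivAt_rpow_const (Or.inl hq.ne')).neg.exp
  linear_combination -hderiv'.unique hexp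

end LaplaceTransform

/-- The paper's `N_α(t, x) = x / (α t) · t^{-1/α} g (x t^{-1/α})`. -/
noncomputable def subordinationKernel (α : ℝ) (g : ℝ → ℝ) (t x : ℝ) : ℝ :=
  x / α * t ^ (-1 - 1 / α) * g (x / t ^ (1 / α))

theorem subordinationKernel_nonneg {α : ℝ} {g : ℝ → ℝ} (hα : 0 ≤ α)
    (hg : ∀ x ∈ Ioi 0, 0 ≤ g x) {t x : ℝ} (ht : 0 < t) (hx : 0 < x) :
    0 ≤ subordinationKernel α g t x := by
  have := hg _ (div_pos hx (rpow_pos_of_pos ht (1 / α)))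
  have := rpow_pos_of_pos ht (-1 - 1 / α)
  unfold subordinationKernel
  positivity

theorem integral_exp_neg_mul_subordinationKernel {α : ℝ} {g : ℝ → ℝ} (hα : α ≠ 0)
    (hgL : ∀ p, 0 < p → ∫ x in Ioi 0, exp (-p * x) * g x = exp (-(p ^ α)))
    {p t : ℝ} (hp : 0 < p) (ht : 0 < t) :
    IntegrableOn (fun x => exp (-p * x) * subordinationKernel α g t x) (Ioi 0) ∧
      ∫ x in Ioi 0, exp (-p * x) * subordinationKernel α g t x
        = p ^ (α - 1) * exp (-(p ^ α) * t) := by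
  obtain ⟨c, hc, rfl⟩ : ∃ c > 0, t = c ^ α :=
    ⟨t ^ (1 / α), rpow_pos_of_pos ht _,
      by rw [← rpow_mul ht.le, one_div_mul_cancel hα, rpow_one]⟩
  set h : ℝ → ℝ := fun y => y * (exp (-(p * c) * y) * g y)
  have hscale : ∀ x, exp (-p * x) * subordinationKernel α g (c ^ α) x
      = c ^ (-α) / α * h (c⁻¹ * x) := by
    intro x
    have hroot : (c ^ α) ^ (1 / α) = c := by rw [one_div, rpow_rpow_inv hc.le hα]
    have hpow : (c ^ α) ^ (-1 - 1 / α) = c ^ (-α) / c := by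
      rw [← rpow_mul hc.le, ← rpow_sub_one hc.ne']; congr 1; field_simp
    simp only [subordinationKernel, h, hroot, hpow]
    field_simp
  obtain ⟨hint, hmom⟩ := integral_mul_exp_neg_mul_of_laplace_eq hgL (mul_pos hp hc)
  simp_rw [hscale]
  refine ⟨?_, ?_⟩
  · refine Integrable.const_mul ?_ _
    exact (integrableOn_Ioi_comp_mul_left_iff h 0 (inv_pos.2 hc)).2 (by rwa [mul_zero])
  · rw [integral_const_mul, integral_comp_mul_left_Ioi h 0 (inv_pos.2 hc), mul_zero, inv_inv,
      smul_eq_mul, hmom, mul_rpow hp.le hc.le, mul_rpow hp.le hc.le, rpow_sub_one hc.ne',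
      rpow_sub_one hp.ne', rpow_neg hc.le]
    field_simp

theorem laplace_levy_subordination_bar_general (α : ℝ) (hα0 : 0 < α)
    (g : ℝ → ℝ) (hg : Measurable g) (hgpos : ∀ x ∈ Ioi (0 : ℝ), 0 ≤ g x)
    (hgL : ∀ p : ℝ, 0 < p →
      (∫ x in Ioi (0 : ℝ), Real.exp (-p * x) * g x) = Real.exp (-(p ^ α)))
    (f : ℝ → ℝ) (hf : Measurable f) (hfpos : ∀ t ∈ Ioi (0 : ℝ), 0 ≤ f t)
    (hint : ∀ p : ℝ, 0 < p →
      IntegrableOn (fun t => Real.exp (-p * t) * f t) (Ioi 0))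
    (F : ℝ → ℝ) (hF : ∀ p : ℝ, F p = ∫ t in Ioi (0 : ℝ), Real.exp (-p * t) * f t) :
    ∀ p : ℝ, 0 < p →
      (∫ x in Ioi (0 : ℝ), Real.exp (-p * x) *
        (x / α * ∫ t in Ioi (0 : ℝ), t ^ (-1 - 1 / α) * g (x / t ^ (1 / α)) * f t))
        = p ^ (α - 1) * F (p ^ α) := by
  intro p hp
  set H : ℝ → ℝ → ℝ := fun x t => exp (-p * x) * subordinationKernel α g t x * f t
  have hH_inner : ∀ t ∈ Ioi (0 : ℝ), IntegrableOn (H · t) (Ioi 0) ∧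
      ∫ x in Ioi 0, H x t = p ^ (α - 1) * (exp (-(p ^ α) * t) * f t) := fun t ht => by
    obtain ⟨hint_t, hint_eq⟩ := integral_exp_neg_mul_subordinationKernel hα0.ne' hgL hp ht
    refine ⟨hint_t.mul_const _, ?_⟩
    rw [integral_mul_const, hint_eq, mul_assoc]
  have hH_meas : Measurable (Function.uncurry H) := by
    unfold H subordinationKernel; fun_prop
  calc _ = ∫ x in Ioi 0, ∫ t in Ioi 0, H x t := by
        refine integral_congr_ae (Filter.Eventually.of_forall fun x => ?_)
        simp only [H, subordinationKernel, ← integral_const_mul]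
        congr 1; ext t; ring
    _ = ∫ t in Ioi 0, ∫ x in Ioi 0, H x t := by
        refine integral_integral_swap_of_nonneg hH_meas.aestronglyMeasurable ?_ ?_ ?_
        · filter_upwards [ae_restrict_mem measurableSet_Ioi] with t ht
          filter_upwards [ae_restrict_mem measurableSet_Ioi] with x hx
          have := subordinationKernel_nonneg hα0.le hgpos ht hx
          have := hfpos t ht
          positivity
        · filter_upwards [ae_restrict_mem measurableSet_Ioi] with t ht using (hH_inner t ht).1
        · exact IntegrableOn.congr_fun ((hint _ (rpow_pos_of_pos hp α)).const_mul _)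
            (fun t ht => (hH_inner t ht).2.symm) measurableSet_Ioi
    _ = ∫ t in Ioi 0, p ^ (α - 1) * (exp (-(p ^ α) * t) * f t) :=
        setIntegral_congr_fun measurableSet_Ioi fun t ht => (hH_inner t ht).2
    _ = p ^ (α - 1) * F (p ^ α) := by rw [integral_const_mul, hF]

theorem laplace_levy_subordination_bar (α : ℝ) (hα0 : 0 < α) (hα1 : α < 1)
    (g : ℝ → ℝ) (hg : Measurable g) (hgpos : ∀ x ∈ Ioi (0 : ℝ), 0 ≤ g x)
    (hgL : ∀ p : ℝ, 0 < p →
      (∫ x in Ioi (0 : ℝ), Real.exp (-p * x) * g x) = Real.exp (-(p ^ α)))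
    (f : ℝ → ℝ) (hf : Measurable f) (hfpos : ∀ t ∈ Ioi (0 : ℝ), 0 ≤ f t)
    (hint : ∀ p : ℝ, 0 < p →
      IntegrableOn (fun t => Real.exp (-p * t) * f t) (Ioi 0))
    (F : ℝ → ℝ) (hF : ∀ p : ℝ, F p = ∫ t in Ioi (0 : ℝ), Real.exp (-p * t) * f t) :
    ∀ p : ℝ, 0 < p →
      (∫ x in Ioi (0 : ℝ), Real.exp (-p * x) *
        (x / α * ∫ t in Ioi (0 : ℝ), t ^ (-1 - 1 / α) * g (x / t ^ (1 / α)) * f t))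
        = p ^ (α - 1) * F (p ^ α) :=
  laplace_levy_subordination_bar_general α hα0 g hg hgpos hgL f hf hfpos hint F hF
end

section
/- Suppose g_α and g_β are nonnegative measurable functions on (0,∞) with ∫_0^∞ e^{-px} g_α(x) dx = exp(-p^α) and ∫_0^∞ e^{-px} g_β(x) dx = exp(-p^β) for all p > 0, with 0 < α, β < 1. Define h(x) = ∫_0^∞ u^{-1/α} g_α(x / u^{1/α}) g_β(u) du. Then ∫_0^∞ e^{-px} h(x) dx = exp(-p^{αβ}) for all p > 0. -/
set_option maxHeartbeats 1000000


open MeasureTheory Real Set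

lemma integrable_of_integral_ne_zero {f : ℝ → ℝ} {μ : Measure ℝ}
    (h : (∫ x, f x ∂μ) ≠ 0) : Integrable f μ := by
  by_contra hf
  exact h (integral_undef hf)

theorem laplace_levy_composition (α β : ℝ) (hα0 : 0 < α) (hα1 : α < 1)
    (hβ0 : 0 < β) (hβ1 : β < 1)
    (gα gβ : ℝ → ℝ) (hgα : Measurable gα) (hgβ : Measurable gβ)
    (hgαpos : ∀ x ∈ Ioi (0 : ℝ), 0 ≤ gα x) (hgβpos : ∀ x ∈ Ioi (0 : ℝ), 0 ≤ gβ x)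
    (hgαL : ∀ p : ℝ, 0 < p →
      (∫ x in Ioi (0 : ℝ), Real.exp (-p * x) * gα x) = Real.exp (-(p ^ α)))
    (hgβL : ∀ p : ℝ, 0 < p →
      (∫ x in Ioi (0 : ℝ), Real.exp (-p * x) * gβ x) = Real.exp (-(p ^ β))) :
    ∀ p : ℝ, 0 < p →
      (∫ x in Ioi (0 : ℝ), Real.exp (-p * x) *
        ∫ u in Ioi (0 : ℝ), u ^ (-(1 / α)) * gα (x / u ^ (1 / α)) * gβ u)
        = Real.exp (-(p ^ (α * β))) := by
  intro p hp
  set μ := volume.restrict (Ioi (0 : ℝ)) with hμ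
  -- the full integrand as a function on the product
  set F : ℝ × ℝ → ℝ :=
    fun q => Real.exp (-p * q.1) * (q.2 ^ (-(1 / α)) * gα (q.1 / q.2 ^ (1 / α)) * gβ q.2)
      with hF
  have hmeas_rpow : ∀ c : ℝ, Measurable fun u : ℝ => u ^ c :=
    fun c => measurable_id.pow measurable_const
  have hFmeas : Measurable F := by
    apply Measurable.mul
    · exact (measurable_fst.const_mul (-p)).exp
    · exact (((hmeas_rpow _).comp measurable_snd).mul
        (hgα.comp (measurable_fst.div ((hmeas_rpow _).comp measurable_snd)))).mul
        (hgβ.comp measurable_snd)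
  -- a.e. nonnegativity on the product
  have hprodr : μ.prod μ = (volume.prod volume).restrict (Ioi (0:ℝ) ×ˢ Ioi (0:ℝ)) :=
    Measure.prod_restrict _ _
  have hFnn : 0 ≤ᵐ[μ.prod μ] F := by
    rw [hprodr]
    filter_upwards [ae_restrict_mem (measurableSet_Ioi.prod measurableSet_Ioi)] with q hq
    obtain ⟨hq1, hq2⟩ := hq
    have h2 : (0:ℝ) < q.2 ^ (1 / α) := Real.rpow_pos_of_pos hq2 _
    have h3 : (0:ℝ) < q.2 ^ (-(1 / α)) := Real.rpow_pos_of_pos hq2 _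
    have h4 : 0 < q.1 / q.2 ^ (1 / α) := div_pos hq1 h2
    exact mul_nonneg (Real.exp_nonneg _)
      (mul_nonneg (mul_nonneg h3.le (hgαpos _ h4)) (hgβpos _ hq2))
  -- key pointwise computation of the inner integral (in x) for fixed u > 0
  have key : ∀ u : ℝ, 0 < u →
      (∫ x in Ioi (0:ℝ), F (x, u)) = Real.exp (-(p ^ α) * u) * gβ u := by
    intro u hu
    set c : ℝ := u ^ (1 / α) with hc
    have hcpos : 0 < c := Real.rpow_pos_of_pos hu _
    have hcα : c ^ α = u := by
      rw [hc, ← Real.rpow_mul hu.le, one_div, inv_mul_cancel₀ hα0.ne', Real.rpow_one]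
    have hstep : ∀ x : ℝ, F (x, u)
        = (u ^ (-(1 / α)) * gβ u) * ((fun y => Real.exp (-(p * c) * y) * gα y) (c⁻¹ * x)) := by
      intro x
      simp only [hF]
      have : -(p * c) * (c⁻¹ * x) = -p * x := by
        field_simp
      rw [this]
      have : c⁻¹ * x = x / c := by ring
      rw [this]
      ring
    calc (∫ x in Ioi (0:ℝ), F (x, u))
        = ∫ x in Ioi (0:ℝ),
            (u ^ (-(1 / α)) * gβ u) * ((fun y => Real.exp (-(p * c) * y) * gα y) (c⁻¹ * x)) := by
          exact setIntegral_congr_fun measurableSet_Ioi fun x _ => hstep x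
      _ = (u ^ (-(1 / α)) * gβ u) *
            ∫ x in Ioi (0:ℝ), (fun y => Real.exp (-(p * c) * y) * gα y) (c⁻¹ * x) := by
          rw [integral_const_mul]
      _ = (u ^ (-(1 / α)) * gβ u) *
            ((c⁻¹)⁻¹ • ∫ y in Ioi (c⁻¹ * 0), Real.exp (-(p * c) * y) * gα y) := by
          rw [integral_comp_mul_left_Ioi (fun y => Real.exp (-(p * c) * y) * gα y) 0
            (inv_pos.mpr hcpos)]
      _ = (u ^ (-(1 / α)) * gβ u) * (c * Real.exp (-((p * c) ^ α))) := by
          rw [mul_zero, inv_inv, hgαL (p * c) (mul_pos hp hcpos), smul_eq_mul]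
      _ = Real.exp (-(p ^ α) * u) * gβ u := by
          rw [Real.mul_rpow hp.le hcpos.le, hcα]
          have huc : u ^ (-(1 / α)) * c = 1 := by
            rw [hc, ← Real.rpow_add hu, neg_add_cancel, Real.rpow_zero]
          have : u ^ (-(1 / α)) * gβ u * (c * Real.exp (-(p ^ α * u)))
              = (u ^ (-(1 / α)) * c) * (Real.exp (-(p ^ α * u)) * gβ u) := by ring
          rw [this, huc, one_mul, neg_mul]
  -- integrability of the outer Laplace integrand for gβ
  have hβint : Integrable (fun u => Real.exp (-(p ^ α) * u) * gβ u) μ := by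
    apply integrable_of_integral_ne_zero
    rw [hgβL (p ^ α) (Real.rpow_pos_of_pos hp α)]
    exact (Real.exp_pos _).ne'
  have hβnn : 0 ≤ᵐ[μ] fun u => Real.exp (-(p ^ α) * u) * gβ u := by
    filter_upwards [ae_restrict_mem measurableSet_Ioi] with u hu
    exact mul_nonneg (Real.exp_nonneg _) (hgβpos u hu)
  -- integrability of F on the product measure, via Tonelli
  have hFint : Integrable F (μ.prod μ) := by
    refine ⟨hFmeas.aestronglyMeasurable, ?_⟩
    rw [hasFiniteIntegral_iff_ofReal hFnn]
    rw [lintegral_prod_symm _ (hFmeas.ennreal_ofReal.aemeasurable)]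
    have hinner : ∀ᵐ u ∂μ, (∫⁻ x, ENNReal.ofReal (F (x, u)) ∂μ)
        = ENNReal.ofReal (Real.exp (-(p ^ α) * u) * gβ u) := by
      filter_upwards [ae_restrict_mem measurableSet_Ioi] with u hu
      have hcpos : (0:ℝ) < u ^ (1 / α) := Real.rpow_pos_of_pos hu _
      have hnn : 0 ≤ᵐ[μ] fun x => F (x, u) := by
        filter_upwards [ae_restrict_mem measurableSet_Ioi] with x hx
        have h4 : 0 < x / u ^ (1 / α) := div_pos hx hcpos
        exact mul_nonneg (Real.exp_nonneg _)
          (mul_nonneg (mul_nonneg (Real.rpow_pos_of_pos hu _).le (hgαpos _ h4)) (hgβpos _ hu))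
      have hintx : Integrable (fun x => F (x, u)) μ := by
        by_cases hβ0' : gβ u = 0
        · have : (fun x => F (x, u)) = fun _ => 0 := by
            funext x; simp [hF, hβ0']
          rw [this]; exact integrable_zero _ _ _
        · apply integrable_of_integral_ne_zero
          rw [key u hu]
          exact mul_ne_zero (Real.exp_pos _).ne' hβ0'
      rw [← ofReal_integral_eq_lintegral_ofReal hintx hnn, key u hu]
    rw [lintegral_congr_ae hinner,
      ← ofReal_integral_eq_lintegral_ofReal hβint hβnn]
    exact ENNReal.ofReal_lt_top
  -- now compute
  calc (∫ x in Ioi (0 : ℝ), Real.exp (-p * x) *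
        ∫ u in Ioi (0 : ℝ), u ^ (-(1 / α)) * gα (x / u ^ (1 / α)) * gβ u)
      = ∫ x, (∫ u, F (x, u) ∂μ) ∂μ := by
        refine setIntegral_congr_fun measurableSet_Ioi fun x _ => ?_
        rw [← integral_const_mul]
    _ = ∫ u, (∫ x, F (x, u) ∂μ) ∂μ := integral_integral_swap hFint
    _ = ∫ u, Real.exp (-(p ^ α) * u) * gβ u ∂μ := by
        refine setIntegral_congr_fun measurableSet_Ioi fun u hu => key u hu
    _ = Real.exp (-((p ^ α) ^ β)) := hgβL (p ^ α) (Real.rpow_pos_of_pos hp α)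
    _ = Real.exp (-(p ^ (α * β))) := by rw [← Real.rpow_mul hp.le]
end
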